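/- arXiv:1705.02183 — 5 statements merged into one kernel-verified Lean document; each statement's English description precedes it below -/
import Mathlib

section
/- Let A : ℝ → Matrix (Fin (2*d)) (Fin (2*d)) ℝ be continuous (smooth), and let α : ℝ → ℝ be continuous with α(t) = 0 for t ≤ 0 and α(t) > 0 for t > 0. Let ξ : ℝ → Matrix (Fin (2*d)) (Fin d) ℝ solve ξ'(s) = A(s)·ξ(s) + α(s)·B with ξ(0) = 0, where B is the 2d×d matrix whose top d×d block is the identity and bottom block is zero. Write ξ₁₁(s) for the top d×d block of ξ(s). Then there exists ε₀ > 0 such that for all s ∈ (0, ε₀), det ξ₁₁(s) > ( (1/2) ∫₀ˢ α(t) dt )^d. -/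
/-!
Put `β s = ∫₀ˢ α`. The error `e = ξ - β • B` satisfies `e' = A ξ`, and near `0` one has
`‖A ξ‖ ≤ M (‖e‖ + β ‖B‖)`, so Grönwall's inequality gives `‖e s‖ ≤ β s ‖B‖ (exp (M s) - 1)`,
which is `o(β s)`. Hence `ξ s / β s → B`, the top block of `ξ s / β s` tends to the identity, and
`det ξ₁₁(s) / β(s)^d → 1 > 2⁻ᵈ`.
-/

open Set Filter Topology

section LinearODE

variable {E : Type*} [NormedAddCommGroup E] [NormedSpace ℝ E]
  {ξ g : ℝ → E} {α : ℝ → ℝ} {b : E}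

/-- Grönwall's inequality for `ξ - (∫₀ˢ α) • b`, whose derivative is `g`. -/
lemma norm_sub_integral_smul_le {K s : ℝ} (hK : 0 < K) (hs : 0 ≤ s) (hα : Continuous α)
    (hα_nonneg : ∀ u ≥ 0, 0 ≤ α u) (hξ0 : ξ 0 = 0)
    (hξ : ∀ t, HasDerivAt ξ (g t + α t • b) t) (hg : ∀ t ∈ Ico 0 s, ‖g t‖ ≤ K * ‖ξ t‖) :
    ‖ξ s - (∫ u in 0..s, α u) • b‖ ≤ (∫ u in 0..s, α u) * ‖b‖ * (Real.exp (K * s) - 1) := by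
  set β : ℝ → ℝ := fun t => ∫ u in 0..t, α u
  have he : ∀ t, HasDerivAt (fun t => ξ t - β t • b) (g t) t := fun t =>
    ((hξ t).sub (((hα.integral_hasStrictDerivAt 0 t).hasDerivAt).smul_const b)).congr_deriv
      (add_sub_cancel_right _ _)
  have bound : ∀ t ∈ Ico 0 s, ‖g t‖ ≤ K * ‖ξ t - β t • b‖ + K * (β s * ‖b‖) := by
    intro t ht
    have hβt : 0 ≤ β t := intervalIntegral.integral_nonneg ht.1 fun u hu => hα_nonneg u hu.1
    have hβts : β t ≤ β s := intervalIntegral.integral_mono_interval le_rfl ht.1 ht.2.le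
      (MeasureTheory.ae_restrict_of_forall_mem measurableSet_Ioc fun u hu => hα_nonneg u hu.1.le)
      (hα.intervalIntegrable 0 s)
    calc ‖g t‖ ≤ K * ‖(ξ t - β t • b) + β t • b‖ := by simpa using hg t ht
      _ ≤ K * (‖ξ t - β t • b‖ + ‖β t • b‖) := by gcongr; exact norm_add_le _ _
      _ ≤ K * (‖ξ t - β t • b‖ + β s * ‖b‖) := by
        rw [norm_smul, Real.norm_of_nonneg hβt]
        gcongr
      _ = _ := mul_add _ _ _
  have := norm_le_gronwallBound_of_norm_deriv_right_le
    (fun t _ => (he t).continuousAt.continuousWithinAt)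
    (fun t _ => (he t).hasDerivWithinAt) (δ := 0) (by simp [β, hξ0]) bound s ⟨hs, le_rfl⟩
  rw [gronwallBound_of_K_ne_0 hK.ne', sub_zero] at this
  simpa [β, hK.ne'] using this

theorem tendsto_inv_integral_smul_of_hasDerivAt {M : ℝ} (hα : Continuous α)
    (hα_nonneg : ∀ u ≥ 0, 0 ≤ α u) (hβ_pos : ∀ s > 0, 0 < ∫ u in 0..s, α u) (hξ0 : ξ 0 = 0)
    (hξ : ∀ t, HasDerivAt ξ (g t + α t • b) t) (hg : ∀ᶠ t in 𝓝[≥] 0, ‖g t‖ ≤ M * ‖ξ t‖) :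
    Tendsto (fun s => (∫ u in 0..s, α u)⁻¹ • ξ s) (𝓝[>] 0) (𝓝 b) := by
  set K := max M 1
  obtain ⟨δ, hδ, hgδ⟩ := (nhdsGE_basis 0).eventually_iff.mp hg
  have hbound : ∀ s ∈ Ioo 0 δ,
      ‖(∫ u in 0..s, α u)⁻¹ • ξ s - b‖ ≤ ‖b‖ * (Real.exp (K * s) - 1) := by
    intro s hs
    have hβ := hβ_pos s hs.1
    have hgK : ∀ t ∈ Ico 0 s, ‖g t‖ ≤ K * ‖ξ t‖ := fun t ht =>
      (hgδ ⟨ht.1, ht.2.trans hs.2⟩).trans (by gcongr; exact le_max_left _ _)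
    have heq : (∫ u in 0..s, α u)⁻¹ • ξ s - b =
        (∫ u in 0..s, α u)⁻¹ • (ξ s - (∫ u in 0..s, α u) • b) := by
      rw [smul_sub, inv_smul_smul₀ hβ.ne']
    rw [heq, norm_smul, Real.norm_of_nonneg (inv_nonneg.2 hβ.le), inv_mul_le_iff₀ hβ,
      ← mul_assoc]
    exact norm_sub_integral_smul_le (lt_max_of_lt_right one_pos) hs.1.le hα hα_nonneg hξ0 hξ hgK
  rw [tendsto_iff_norm_sub_tendsto_zero]
  refine squeeze_zero_norm' ?_ (?_ : Tendsto (fun s => ‖b‖ * (Real.exp (K * s) - 1)) _ _)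
  · filter_upwards [Ioo_mem_nhdsGT hδ] with s hs
    simpa using hbound s hs
  · have : Continuous fun s => ‖b‖ * (Real.exp (K * s) - 1) := by fun_prop
    simpa using (this.tendsto 0).mono_left nhdsWithin_le_nhds

end LinearODE

lemma Matrix.eventually_pow_lt_det_of_tendsto_inv_smul {X : Type*} {l : Filter X} {n : ℕ}
    (hn : 0 < n) {c : X → ℝ} {Y : X → Matrix (Fin n) (Fin n) ℝ} (hc : ∀ᶠ x in l, 0 < c x)
    (hY : Tendsto (fun x => (c x)⁻¹ • Y x) l (𝓝 1)) {r : ℝ} (hr0 : 0 ≤ r) (hr1 : r < 1) :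
    ∀ᶠ x in l, (r * c x) ^ n < (Y x).det := by
  have hdet : Tendsto (fun x => ((c x)⁻¹ • Y x).det) l (𝓝 1) :=
    Matrix.det_one (n := Fin n) (R := ℝ) ▸ (continuous_id.matrix_det.tendsto 1).comp hY
  filter_upwards [hc, hdet.eventually (lt_mem_nhds (pow_lt_one₀ hr0 hr1 hn.ne'))] with x hcx hx
  calc (r * c x) ^ n = c x ^ n * r ^ n := by ring
    _ < c x ^ n * ((c x)⁻¹ • Y x).det := mul_lt_mul_of_pos_left hx (pow_pos hcx n)
    _ = (Y x).det := by
        rw [Matrix.det_smul, Fintype.card_fin, inv_pow, mul_inv_cancel_left₀ (pow_pos hcx n).ne']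

-- The entrywise sup norm on matrices is the product norm, so `hasDerivAt_pi` reads derivatives
-- of matrix-valued functions entrywise.
attribute [local instance] Matrix.seminormedAddCommGroup Matrix.normedAddCommGroup
  Matrix.normedSpace

lemma Matrix.norm_mul_le_card_mul {l m n α : Type*} [Fintype l] [Fintype m] [Fintype n]
    [SeminormedRing α] (A : Matrix l m α) (X : Matrix m n α) :
    ‖A * X‖ ≤ Fintype.card m * ‖A‖ * ‖X‖ := by
  refine (Matrix.norm_le_iff (by positivity)).2 fun i j => ?_
  calc ‖(A * X) i j‖ ≤ ∑ k, ‖A i k‖ * ‖X k j‖ :=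
        (norm_sum_le _ _).trans (Finset.sum_le_sum fun k _ => norm_mul_le _ _)
    _ ≤ ∑ _k : m, ‖A‖ * ‖X‖ := by
        gcongr <;> exact Matrix.norm_entry_le_entrywise_sup_norm _
    _ = Fintype.card m * ‖A‖ * ‖X‖ := by simp [mul_assoc]

lemma Matrix.exists_eventually_norm_mul_le {l m n : Type*} [Fintype l] [Fintype m] [Fintype n]
    {A : ℝ → Matrix l m ℝ} {t₀ : ℝ} (hA : ContinuousAt A t₀) :
    ∃ M, ∀ᶠ t in 𝓝 t₀, ∀ X : Matrix m n ℝ, ‖A t * X‖ ≤ M * ‖X‖ := by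
  refine ⟨Fintype.card m * (‖A t₀‖ + 1), ?_⟩
  filter_upwards [hA.norm.eventually (gt_mem_nhds (lt_add_one _))] with t ht X
  refine (Matrix.norm_mul_le_card_mul _ _).trans ?_
  gcongr

theorem stmt_0 (d : ℕ) (hd : 0 < d)
    (A : ℝ → Matrix (Fin (2*d)) (Fin (2*d)) ℝ)
    (hA : ∀ i j, Continuous fun s => A s i j)
    (α : ℝ → ℝ) (hα : Continuous α)
    (hα0 : ∀ t ≤ (0:ℝ), α t = 0) (hαpos : ∀ t > (0:ℝ), 0 < α t)
    (B : Matrix (Fin (2*d)) (Fin d) ℝ)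
    (hB : B = Matrix.of fun (i : Fin (2*d)) (j : Fin d) => if (i : ℕ) = (j : ℕ) then (1:ℝ) else 0)
    (ξ : ℝ → Matrix (Fin (2*d)) (Fin d) ℝ)
    (hξ0 : ξ 0 = 0)
    (hode : ∀ (s : ℝ) (i : Fin (2*d)) (j : Fin d),
      HasDerivAt (fun s => ξ s i j) ((A s * ξ s) i j + α s * B i j) s) :
    ∃ ε₀ > (0:ℝ), ∀ s ∈ Set.Ioo (0:ℝ) ε₀,
      ((1/2) * ∫ t in (0:ℝ)..s, α t) ^ d <
        Matrix.det (Matrix.of fun i j : Fin d =>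
          ξ s (Fin.castLE (by omega) i) j) := by
  have hle : d ≤ 2 * d := by omega
  set β : ℝ → ℝ := fun s => ∫ t in (0:ℝ)..s, α t
  have hβ_pos : ∀ s > 0, 0 < β s := fun s hs =>
    intervalIntegral.intervalIntegral_pos_of_pos_on (hα.intervalIntegrable 0 s)
      (fun t ht => hαpos t ht.1) hs
  have hα_nonneg : ∀ t ≥ 0, 0 ≤ α t := fun t ht =>
    ht.eq_or_lt.elim (fun h => (hα0 t h.ge).ge) fun h => (hαpos t h).le
  have hξ : ∀ s, HasDerivAt ξ (A s * ξ s + α s • B) s := fun s =>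
    hasDerivAt_pi.2 fun i => hasDerivAt_pi.2 fun j => hode s i j
  obtain ⟨M, hM⟩ := Matrix.exists_eventually_norm_mul_le (n := Fin d)
    (continuous_pi fun i => continuous_pi fun j => hA i j).continuousAt (t₀ := 0)
  have hlim : Tendsto (fun s => (β s)⁻¹ • ξ s) (𝓝[>] 0) (𝓝 B) :=
    tendsto_inv_integral_smul_of_hasDerivAt hα hα_nonneg hβ_pos hξ0 hξ
      ((eventually_nhdsWithin_of_eventually_nhds hM).mono fun t ht => ht (ξ t))
  have hB_top : B.submatrix (Fin.castLE hle) id = 1 := by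
    ext i j
    simp [hB, Matrix.one_apply, Fin.ext_iff]
  have hlim_top : Tendsto (fun s => (β s)⁻¹ • (ξ s).submatrix (Fin.castLE hle) id) (𝓝[>] 0)
      (𝓝 1) :=
    hB_top ▸ ((continuous_id.matrix_submatrix (Fin.castLE hle) id).tendsto B).comp hlim
  obtain ⟨ε, hε, hεdet⟩ := (nhdsGT_basis 0).eventually_iff.mp <|
    Matrix.eventually_pow_lt_det_of_tendsto_inv_smul hd (eventually_mem_nhdsWithin.mono hβ_pos)
      hlim_top (by norm_num) (by norm_num : (1:ℝ) / 2 < 1)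
  exact ⟨ε, hε, fun s hs => hεdet hs⟩
end

section
/- Let α : ℝ → ℝ and h, f : ℝ → ℝ be continuous functions, with α(s) > 0 for s > 0 and α(s) = 0 for s ≤ 0. Suppose u, v : ℝ → ℝ satisfy the ODE system u'(s) = v(s) + h(s)·u(s) + α(s), v'(s) = -2 f(s)·u(s) - h(s)·v(s), with u(0) = 0 and v(0) = 0. Then u is not identically zero on any interval (0, ε₀) with ε₀ > 0. -/
theorem stmt_1 (α h f : ℝ → ℝ) (hα : Continuous α) (hh : Continuous h)
    (hf : Continuous f)
    (hαpos : ∀ s > (0:ℝ), 0 < α s) (hα0 : ∀ s ≤ (0:ℝ), α s = 0)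
    (u v : ℝ → ℝ) (hu0 : u 0 = 0) (hv0 : v 0 = 0)
    (hu : ∀ s, HasDerivAt u (v s + h s * u s + α s) s)
    (hv : ∀ s, HasDerivAt v (-(2 * f s * u s) - h s * v s) s) :
    ∀ ε₀ > (0:ℝ), ¬ (∀ s ∈ Set.Ioo (0:ℝ) ε₀, u s = 0) := by
  intro ε₀ hε₀ H
  set b := ε₀ / 2 with hbdef
  have hb0 : 0 < b := by positivity
  have hbε : b < ε₀ := by simp [hbdef]; linarith
  have hu_zero : ∀ x ∈ Set.Ico (0:ℝ) ε₀, u x = 0 := by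
    intro x hx
    rcases eq_or_lt_of_le hx.1 with h0 | h0
    · rw [← h0]; exact hu0
    · exact H x ⟨h0, hx.2⟩
  obtain ⟨K, hK⟩ :=
    (isCompact_Icc (a := (0:ℝ)) (b := b)).exists_bound_of_continuousOn hh.continuousOn
  have key : ∀ x ∈ Set.Icc (0:ℝ) b, ‖v x‖ ≤ gronwallBound 0 K 0 (x - 0) := by
    apply norm_le_gronwallBound_of_norm_deriv_right_le
      (fun x _ => (hv x).continuousAt.continuousWithinAt)
      (fun x _ => (hv x).hasDerivWithinAt)
    · simp [hv0]
    · intro x hx1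
      have hux : u x = 0 := hu_zero x ⟨hx1.1, lt_of_lt_of_le hx1.2 hbε.le⟩
      rw [hux, add_zero]
      have hKx := hK x ⟨hx1.1, hx1.2.le⟩
      have h1 : ‖-(2 * f x * 0) - h x * v x‖ = ‖h x‖ * ‖v x‖ := by
        rw [mul_zero, neg_zero, zero_sub, norm_neg, norm_mul]
      rw [h1]
      exact mul_le_mul_of_nonneg_right hKx (norm_nonneg _)
  have hvb : v b = 0 := by
    have := key b ⟨hb0.le, le_refl b⟩
    rw [gronwallBound_ε0] at this
    simp at this
    exact norm_le_zero_iff.mp (by simpa using this)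
  have hub : u b = 0 := H b ⟨hb0, hbε⟩
  have hEq : u =ᶠ[nhds b] (fun _ => (0:ℝ)) :=
    Filter.eventuallyEq_of_mem (isOpen_Ioo.mem_nhds ⟨hb0, hbε⟩) H
  have hderiv0 : HasDerivAt u 0 b :=
    (hasDerivAt_const b (0:ℝ)).congr_of_eventuallyEq hEq
  have huniq : v b + h b * u b + α b = 0 := (hu b).unique hderiv0
  rw [hub, hvb] at huniq
  have : α b = 0 := by linarith
  exact absurd this (ne_of_gt (hαpos b hb0))
end

section
/- Let w : ℝ → Matrix (Fin d) (Fin d) ℝ be continuous with w(0) = I, and let α : ℝ → ℝ be continuous, nonnegative, with α(t) > 0 for t > 0. Define η(s) = ∫₀ˢ α(t)·w(t) dt. Then det η(s) = ∫₀ˢ⋯∫₀ˢ α(t₁)⋯α(t_d) · det(w₁(t₁), …, w_d(t_d)) dt₁⋯dt_d, where wⱼ(t) denotes the j-th column of w(t), and there exists ε₀ > 0 such that det η(s) > ((1/2)∫₀ˢ α(t) dt)^d for all s ∈ (0, ε₀). -/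
/-!
Expanding the determinant as a signed sum over permutations and applying Fubini to each product
shows that `det (∫ f i j dμ) = ∫ det (f i j (x j)) dμ^ι`: the determinant is multilinear in the
columns. For `f i j t = α t * w t i j` on `(0, s]` the weight `α (t j)` factors out of column `j`,
which gives the integral formula for `det η(s)`. The column determinant is continuous and equals
`det w(0) = 1` at the origin, so it exceeds `3/4` on the cube `(0, s]^d` once `s` is small; the
integral is then at least `3/4 * (∫₀ˢ α)^d > ((1/2) ∫₀ˢ α)^d`.
-/

open MeasureTheory Matrix Set

section

variable {ι : Type*} [Fintype ι]

theorem det_integral_eq_integral_det {𝕜 X : Type*} [RCLike 𝕜] [DecidableEq ι]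
    [MeasurableSpace X] {μ : Measure X} [SigmaFinite μ] {f : ι → ι → X → 𝕜}
    (hf : ∀ i j, Integrable (f i j) μ) :
    (of fun i j => ∫ x, f i j x ∂μ).det
      = ∫ x : ι → X, (of fun i j => f i j (x j)).det ∂Measure.pi fun _ => μ := by
  have hterm : ∀ σ : Equiv.Perm ι,
      Integrable (fun x : ι → X => ∏ i, f (σ i) i (x i)) (Measure.pi fun _ => μ) :=
    fun σ => Integrable.fintype_prod fun i => hf (σ i) i
  simp_rw [det_apply', of_apply]
  rw [integral_finsetSum _ fun σ _ => (hterm σ).const_mul _]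
  refine Finset.sum_congr rfl fun σ _ => ?_
  rw [integral_const_mul, integral_fintype_prod_eq_prod (fun i => f (σ i) i)]

theorem det_intervalIntegral_eq_setIntegral_pi [DecidableEq ι] {w : ℝ → Matrix ι ι ℝ}
    (hw : ∀ i j, Continuous fun t => w t i j) {α : ℝ → ℝ} (hα : Continuous α) {s : ℝ}
    (hs : 0 ≤ s) :
    (of fun i j => ∫ t in (0:ℝ)..s, α t * w t i j).det
      = ∫ t in univ.pi fun _ : ι => Ioc (0:ℝ) s,
          (∏ j, α (t j)) * (of fun i j => w (t j) i j).det := by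
  simp_rw [intervalIntegral.integral_of_le hs]
  rw [det_integral_eq_integral_det (f := fun i j t => α t * w t i j)
    fun i j => (hα.mul (hw i j)).integrableOn_Ioc, volume_pi, Measure.restrict_pi_pi]
  exact integral_congr_ae (Filter.Eventually.of_forall fun t => det_mul_row _ _)

theorem setIntegral_pi_Ioc_prod_eq_pow (α : ℝ → ℝ) {s : ℝ} (hs : 0 ≤ s) :
    ∫ t in univ.pi fun _ : ι => Ioc (0:ℝ) s, ∏ j, α (t j)
      = (∫ t in (0:ℝ)..s, α t) ^ Fintype.card ι := by
  rw [volume_pi, Measure.restrict_pi_pi, integral_fintype_prod_eq_pow,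
    intervalIntegral.integral_of_le hs]

theorem Continuous.integrableOn_pi_Ioc {F : (ι → ℝ) → ℝ} (hF : Continuous F) (s : ℝ) :
    IntegrableOn F (univ.pi fun _ : ι => Ioc (0:ℝ) s) :=
  (hF.integrableOn_Icc (a := 0) (b := fun _ => s)).mono_set fun _ ht =>
    ⟨fun j => (ht j (mem_univ j)).1.le, fun j => (ht j (mem_univ j)).2⟩

theorem exists_forall_pi_Ioc_lt {G : (ι → ℝ) → ℝ} (hG : ContinuousAt G 0) {c : ℝ}
    (hc : c < G 0) :
    ∃ δ > 0, ∀ s < δ, ∀ t ∈ univ.pi fun _ : ι => Ioc (0:ℝ) s, c < G t := by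
  obtain ⟨δ, hδ, hball⟩ := Metric.eventually_nhds_iff.1 (hG.eventually (lt_mem_nhds hc))
  refine ⟨δ, hδ, fun s hsδ t ht => hball ?_⟩
  rw [dist_pi_lt_iff hδ]
  intro j
  have htj := ht j (mem_univ j)
  rw [Pi.zero_apply, Real.dist_eq, sub_zero, abs_of_pos htj.1]
  exact htj.2.trans_lt hsδ

theorem mul_pow_integral_le_setIntegral_prod_mul {α : ℝ → ℝ} (hα : Continuous α)
    (hαnn : ∀ t, 0 ≤ α t) {G : (ι → ℝ) → ℝ} (hG : Continuous G) {s c : ℝ} (hs : 0 ≤ s)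
    (hcG : ∀ t ∈ univ.pi fun _ : ι => Ioc (0:ℝ) s, c ≤ G t) :
    c * (∫ t in (0:ℝ)..s, α t) ^ Fintype.card ι
      ≤ ∫ t in univ.pi fun _ : ι => Ioc (0:ℝ) s, (∏ j, α (t j)) * G t := by
  have hprod : Continuous fun t : ι → ℝ => ∏ j, α (t j) :=
    continuous_finsetProd _ fun j _ => hα.comp (continuous_apply j)
  rw [← setIntegral_pi_Ioc_prod_eq_pow α hs, ← integral_const_mul]
  refine setIntegral_mono_on ((hprod.integrableOn_pi_Ioc s).const_mul c)
    ((hprod.mul hG).integrableOn_pi_Ioc s) (MeasurableSet.univ_pi fun _ => measurableSet_Ioc)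
    fun t ht => ?_
  rw [mul_comm]
  exact mul_le_mul_of_nonneg_left (hcG t ht) (Finset.prod_nonneg fun j _ => hαnn (t j))

end

theorem stmt_4 (d : ℕ) (hd : 0 < d)
    (w : ℝ → Matrix (Fin d) (Fin d) ℝ)
    (hw : ∀ i j, Continuous fun t => w t i j) (hw0 : w 0 = 1)
    (α : ℝ → ℝ) (hα : Continuous α) (hαnn : ∀ t, 0 ≤ α t)
    (hαpos : ∀ t > (0:ℝ), 0 < α t)
    (η : ℝ → Matrix (Fin d) (Fin d) ℝ)
    (hη : η = fun s => Matrix.of fun i j : Fin d => ∫ t in (0:ℝ)..s, α t * w t i j) :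
    (∀ s : ℝ, 0 ≤ s →
      (η s).det = ∫ t in Set.univ.pi fun _ : Fin d => Set.Ioc (0:ℝ) s,
        (∏ j, α (t j)) * Matrix.det (Matrix.of fun i j : Fin d => w (t j) i j)) ∧
    ∃ ε₀ > (0:ℝ), ∀ s ∈ Set.Ioo (0:ℝ) ε₀,
      ((1/2) * ∫ t in (0:ℝ)..s, α t) ^ d < (η s).det := by
  subst hη
  have hdet := fun s (hs : 0 ≤ s) => det_intervalIntegral_eq_setIntegral_pi hw hα hs
  refine ⟨hdet, ?_⟩
  set G : (Fin d → ℝ) → ℝ := fun t => (of fun i j => w (t j) i j).det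
  have hG : Continuous G :=
    (continuous_matrix fun i j => (hw i j).comp (continuous_apply j)).matrix_det
  have hG0 : G 0 = 1 := by
    change (w 0).det = 1
    rw [hw0, det_one]
  obtain ⟨δ, hδ, hGδ⟩ := exists_forall_pi_Ioc_lt hG.continuousAt (c := 3 / 4)
    (by rw [hG0]; norm_num)
  refine ⟨δ, hδ, fun s ⟨hs0, hsδ⟩ => ?_⟩
  set I := ∫ t in (0:ℝ)..s, α t
  have hI : 0 < I := intervalIntegral.intervalIntegral_pos_of_pos_on
    (hα.intervalIntegrable 0 s) (fun t ht => hαpos t ht.1) hs0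
  have hlower := mul_pow_integral_le_setIntegral_prod_mul hα hαnn hG hs0.le
    fun t ht => (hGδ s hsδ t ht).le
  rw [Fintype.card_fin] at hlower
  rw [hdet s hs0.le]
  calc ((1 / 2) * I) ^ d = (1 / 2) ^ d * I ^ d := mul_pow _ _ _
    _ ≤ 1 / 2 * I ^ d := by
      gcongr
      exact pow_le_of_le_one (by norm_num) (by norm_num) hd.ne'
    _ < 3 / 4 * I ^ d := mul_lt_mul_of_pos_right (by norm_num) (pow_pos hI d)
    _ ≤ _ := hlower
end

section
/- Let u, v : [0,∞) → ℝ^d (viewed as d×d matrix-valued via θ-derivatives) satisfy the linear system u' = v + H(s)u + α(s)e, v' = -2F(s)u - H(s)ᵀv with u(0) = v(0) = 0, where H(s), F(s) are continuous d×d matrix functions, e is a fixed unit vector, and α ≥ 0 with α > 0 on (0,∞). Packaging the d columns (one per unit vector e₁,…,e_d) into a 2d×d matrix ξ = (u; v), this satisfies ξ' = A(s)ξ + α(s)(I_d; 0) with A(s) = [[H(s), I_d], [-2F(s), -H(s)ᵀ]], and hence det u(s) > ((1/2)∫₀ˢ α)^d > 0 for small s > 0. -/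
/-!
Put `ξ = (u; v)`, `E = (I; 0)`, `A(s) = ∫₀ˢ α` and `M(s) = [[H, I], [-2F, -Hᵀ]]`. Then
`g = ξ - A • E` solves `g' = M g + A • M E` with `g 0 = 0`, so Gronwall's inequality bounds
`‖g s‖` by `A(s) ‖E‖ (exp (K s) - 1) = o(A(s))`. Hence `u s = A(s) • (1 + B)` with `B → 0`, and
`det (u s) = A(s)^d det (1 + B) > A(s)^d / 2 ≥ (A(s) / 2)^d`.
-/

open Matrix Filter Set Topology Real

section Algebra

variable {n R : Type*} [DecidableEq n]

def variationalMatrix [Ring R] (H F : Matrix n n R) : Matrix (n ⊕ n) (n ⊕ n) R :=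
  fromBlocks H 1 (-(2 • F)) (-Hᵀ)

theorem variationalMatrix_mul_fromRows_add_smul [Fintype n] [Ring R] (H F u v : Matrix n n R)
    (a : R) :
    variationalMatrix H F * fromRows u v + a • fromRows 1 0 =
      fromRows (v + H * u + a • 1) (-(2 • (F * u)) - Hᵀ * v) := by
  rw [variationalMatrix, fromBlocks_mul_fromRows]
  ext (i | i) j
  · simp [add_comm]
  · simp [sub_eq_add_neg, Matrix.mul_assoc]

theorem Continuous.variationalMatrix [Ring R] [TopologicalSpace R] [IsTopologicalRing R]
    {X : Type*} [TopologicalSpace X] {H F : X → Matrix n n R} (hH : Continuous H)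
    (hF : Continuous F) : Continuous fun x => variationalMatrix (H x) (F x) :=
  hH.matrix_fromBlocks continuous_const (hF.const_smul 2).neg hH.matrix_transpose.neg

end Algebra

section LinftyOpNorm

-- Unlike the entrywise sup norm, this norm is submultiplicative for rectangular matrices.
attribute [local instance] Matrix.linftyOpNormedAddCommGroup Matrix.linftyOpNormedSpace

variable {m n : Type*} [Fintype m] [Fintype n]

theorem Matrix.hasDerivAt_of_hasDerivAt_apply {f : ℝ → Matrix m n ℝ} {f' : Matrix m n ℝ} {x : ℝ}
    (h : ∀ i j, HasDerivAt (fun s => f s i j) (f' i j) x) : HasDerivAt f f' x :=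
  (ofLinearEquiv ℝ (m := m) (n := n) (α := ℝ)).toLinearMap.toContinuousLinearMap.hasFDerivAt
    |>.comp_hasDerivAt x (hasDerivAt_pi.2 fun i => hasDerivAt_pi.2 fun j => h i j)

theorem Matrix.linfty_opNorm_le_fromRows_left {m' : Type*} [Fintype m'] (X : Matrix m n ℝ)
    (Y : Matrix m' n ℝ) : ‖X‖ ≤ ‖fromRows X Y‖ := by
  simp only [linfty_opNorm_def, NNReal.coe_le_coe]
  exact Finset.sup_le fun i _ =>
    Finset.le_sup (f := fun k => ∑ j, ‖fromRows X Y k j‖₊) (Finset.mem_univ (Sum.inl i))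

theorem Matrix.exists_half_pow_lt_det [DecidableEq n] :
    ∃ δ > 0, ∀ (a : ℝ) (X : Matrix n n ℝ), 0 < a → ‖X - a • 1‖ ≤ a * δ →
      a ^ Fintype.card n / 2 < X.det := by
  have hcont : Continuous fun B : Matrix n n ℝ => (1 + B).det :=
    (continuous_const.add continuous_id).matrix_det
  obtain ⟨ε, hε, hdet⟩ := Metric.eventually_nhds_iff.1 <|
    hcont.continuousAt.eventually
      (lt_mem_nhds (a := 1 / 2) (b := (1 + (0 : Matrix n n ℝ)).det) (by norm_num))
  refine ⟨ε / 2, half_pos hε, fun a X ha hX => ?_⟩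
  set B := a⁻¹ • (X - a • 1)
  have hB : dist B 0 < ε := by
    rw [dist_zero_right, norm_smul, norm_inv, Real.norm_of_nonneg ha.le]
    calc a⁻¹ * ‖X - a • 1‖ ≤ a⁻¹ * (a * (ε / 2)) := by gcongr
      _ < ε := by rw [inv_mul_cancel_left₀ ha.ne']; linarith
  have hX : X = a • (1 + B) := by
    rw [smul_add, smul_smul, mul_inv_cancel₀ ha.ne', one_smul]
    abel
  rw [hX, det_smul]
  have := hdet hB
  have : 0 < a ^ Fintype.card n := pow_pos ha _
  nlinarith

theorem Matrix.norm_sub_smul_le_of_hasDerivAt {ξ : ℝ → Matrix m n ℝ} {M : ℝ → Matrix m m ℝ}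
    {E : Matrix m n ℝ} {a a' : ℝ → ℝ} {K c s : ℝ} (hK : 0 < K) (hs : 0 ≤ s)
    (hξ : ∀ x, HasDerivAt ξ (M x * ξ x + a' x • E) x) (ha : ∀ x, HasDerivAt a (a' x) x)
    (hξ0 : ξ 0 = 0) (ha0 : a 0 = 0) (hM : ∀ x ∈ Ico 0 s, ‖M x‖ ≤ K)
    (hac : ∀ x ∈ Ico 0 s, |a x| ≤ c) :
    ‖ξ s - a s • E‖ ≤ c * ‖E‖ * (exp (K * s) - 1) := by
  set g := fun x => ξ x - a x • E
  have hg : ∀ x, HasDerivAt g (M x * g x + a x • (M x * E)) x := fun x => by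
    refine ((hξ x).sub ((ha x).smul_const E)).congr_deriv ?_
    simp only [g, Matrix.mul_sub, Matrix.mul_smul]
    abel
  have bound : ∀ x ∈ Ico 0 s, ‖M x * g x + a x • (M x * E)‖ ≤ K * ‖g x‖ + K * (c * ‖E‖) :=
    fun x hx => calc
      _ ≤ ‖M x‖ * ‖g x‖ + |a x| * (‖M x‖ * ‖E‖) := by
        refine (norm_add_le _ _).trans (add_le_add (linfty_opNorm_mul _ _) ?_)
        rw [norm_smul, Real.norm_eq_abs]
        exact mul_le_mul_of_nonneg_left (linfty_opNorm_mul _ _) (abs_nonneg _)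
      _ ≤ K * ‖g x‖ + c * (K * ‖E‖) := by
        have := hM x hx
        gcongr
        · exact (abs_nonneg _).trans (hac x hx)
        · exact hac x hx
      _ = K * ‖g x‖ + K * (c * ‖E‖) := by ring
  have := norm_le_gronwallBound_of_norm_deriv_right_le
    (fun x _ => (hg x).continuousAt.continuousWithinAt) (fun x _ => (hg x).hasDerivWithinAt)
    (δ := 0) (by simp [g, hξ0, ha0]) bound s ⟨hs, le_rfl⟩
  rw [gronwallBound_of_K_ne_0 hK.ne'] at this
  simpa only [sub_zero, zero_mul, zero_add, mul_div_cancel_left₀ _ hK.ne'] using this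

theorem eventually_norm_sub_integral_smul_le {ξ : ℝ → Matrix m n ℝ} {M : ℝ → Matrix m m ℝ}
    {E : Matrix m n ℝ} {α : ℝ → ℝ} (hM : Continuous M) (hα : Continuous α)
    (hαnn : ∀ s, 0 ≤ α s) (hξ : ∀ s, HasDerivAt ξ (M s * ξ s + α s • E) s) (hξ0 : ξ 0 = 0)
    {δ : ℝ} (hδ : 0 < δ) :
    ∀ᶠ s in 𝓝[≥] 0, ‖ξ s - (∫ t in 0..s, α t) • E‖ ≤ (∫ t in 0..s, α t) * δ := by
  obtain ⟨C, hC⟩ := (isCompact_Icc (a := (0 : ℝ)) (b := 1)).exists_bound_of_continuousOn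
    hM.continuousOn
  set K := max C 1
  have hK : 0 < K := lt_max_of_lt_right one_pos
  have hsmall : ∀ᶠ s in 𝓝 0, ‖E‖ * (exp (K * s) - 1) < δ := by
    refine (Continuous.continuousAt ?_).eventually (gt_mem_nhds ?_)
    · fun_prop
    · simpa using hδ
  filter_upwards [Ico_mem_nhdsGE one_pos, nhdsWithin_le_nhds hsmall] with s ⟨hs0, hs1⟩ hsδ
  have hA : ∀ x ∈ Icc 0 s, |∫ t in 0..x, α t| ≤ ∫ t in 0..s, α t := fun x ⟨hx0, hxs⟩ => by
    rw [abs_of_nonneg (intervalIntegral.integral_nonneg hx0 fun t _ => hαnn t)]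
    exact intervalIntegral.integral_mono_interval le_rfl hx0 hxs (.of_forall hαnn)
      (hα.intervalIntegrable 0 s)
  calc _ ≤ (∫ t in 0..s, α t) * ‖E‖ * (exp (K * s) - 1) :=
        norm_sub_smul_le_of_hasDerivAt hK hs0 hξ
          (fun x => (hα.integral_hasStrictDerivAt 0 x).hasDerivAt) hξ0
          intervalIntegral.integral_same
          (fun x hx => (hC x ⟨hx.1, hx.2.le.trans hs1.le⟩).trans (le_max_left _ _))
          (fun x hx => hA x (Ico_subset_Icc_self hx))
    _ ≤ (∫ t in 0..s, α t) * δ := by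
      rw [mul_assoc]
      exact mul_le_mul_of_nonneg_left hsδ.le ((abs_nonneg _).trans (hA s ⟨hs0, le_rfl⟩))

theorem eventually_integral_pow_half_lt_det [DecidableEq n] {u v : ℝ → Matrix n n ℝ}
    {M : ℝ → Matrix (n ⊕ n) (n ⊕ n) ℝ} {α : ℝ → ℝ} (hM : Continuous M) (hα : Continuous α)
    (hαnn : ∀ s, 0 ≤ α s) (hαpos : ∀ s > 0, 0 < α s)
    (hξ : ∀ s, HasDerivAt (fun s => fromRows (u s) (v s))
      (M s * fromRows (u s) (v s) + α s • fromRows 1 0) s) (hu0 : u 0 = 0) (hv0 : v 0 = 0) :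
    ∀ᶠ s in 𝓝[>] 0, (∫ t in 0..s, α t) ^ Fintype.card n / 2 < (u s).det := by
  obtain ⟨δ, hδ, hdet⟩ := Matrix.exists_half_pow_lt_det (n := n)
  have hclose := eventually_norm_sub_integral_smul_le hM hα hαnn hξ (by simp [hu0, hv0]) hδ
  filter_upwards [nhdsWithin_mono 0 Ioi_subset_Ici_self hclose, self_mem_nhdsWithin]
    with s hs (hs0 : 0 < s)
  have hA : 0 < ∫ t in 0..s, α t := intervalIntegral.intervalIntegral_pos_of_pos_on
    (hα.intervalIntegrable 0 s) (fun x hx => hαpos x hx.1) hs0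
  refine hdet _ _ hA ((linfty_opNorm_le_fromRows_left _ (v s)).trans (le_of_eq_of_le ?_ hs))
  congr 1
  ext (i | i) j <;> simp

end LinftyOpNorm

theorem stmt_12 (d : ℕ) (hd : 0 < d)
    (H F : ℝ → Matrix (Fin d) (Fin d) ℝ)
    (hH : ∀ i j, Continuous fun s => H s i j)
    (hF : ∀ i j, Continuous fun s => F s i j)
    (α : ℝ → ℝ) (hα : Continuous α) (hαnn : ∀ s, 0 ≤ α s)
    (hαpos : ∀ s > (0:ℝ), 0 < α s)
    (u v : ℝ → Matrix (Fin d) (Fin d) ℝ) (hu0 : u 0 = 0) (hv0 : v 0 = 0)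
    (hu : ∀ (s : ℝ) (i j : Fin d), HasDerivAt (fun s => u s i j)
      ((v s + H s * u s + α s • (1 : Matrix (Fin d) (Fin d) ℝ)) i j) s)
    (hv : ∀ (s : ℝ) (i j : Fin d), HasDerivAt (fun s => v s i j)
      ((-(2 • (F s * u s)) - (H s)ᵀ * v s) i j) s) :
    (∀ (s : ℝ) (i : Fin d ⊕ Fin d) (j : Fin d),
      HasDerivAt (fun s => Matrix.of (Sum.elim (u s) (v s)) i j)
        ((Matrix.fromBlocks (H s) 1 (-(2 • F s)) (-(H s)ᵀ) *
            Matrix.of (Sum.elim (u s) (v s))) i j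
          + α s * Matrix.of (Sum.elim (1 : Matrix (Fin d) (Fin d) ℝ)
              (0 : Matrix (Fin d) (Fin d) ℝ)) i j) s) ∧
    ∃ ε₀ > (0:ℝ), ∀ s ∈ Set.Ioo (0:ℝ) ε₀,
      (0:ℝ) < ((1/2) * ∫ t in (0:ℝ)..s, α t) ^ d ∧
      ((1/2) * ∫ t in (0:ℝ)..s, α t) ^ d < (u s).det := by
  have hξ : ∀ s i j, HasDerivAt (fun s => fromRows (u s) (v s) i j)
      ((variationalMatrix (H s) (F s) * fromRows (u s) (v s) + α s • fromRows 1 0 :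
        Matrix (Fin d ⊕ Fin d) (Fin d) ℝ) i j) s := by
    intro s i j
    rw [variationalMatrix_mul_fromRows_add_smul]
    cases i
    exacts [hu s _ j, hv s _ j]
  refine ⟨hξ, (nhdsGT_basis 0).eventually_iff.1 ?_⟩
  filter_upwards [eventually_integral_pow_half_lt_det
    ((continuous_matrix hH).variationalMatrix (continuous_matrix hF)) hα hαnn hαpos
    (fun s => Matrix.hasDerivAt_of_hasDerivAt_apply (hξ s)) hu0 hv0, self_mem_nhdsWithin]
    with s hdet (hs0 : 0 < s)
  set A := ∫ t in 0..s, α t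
  have hA : 0 < A := intervalIntegral.intervalIntegral_pos_of_pos_on
    (hα.intervalIntegrable 0 s) (fun x hx => hαpos x hx.1) hs0
  refine ⟨by positivity, ?_⟩
  calc (1 / 2 * A) ^ d = (1 / 2) ^ d * A ^ d := mul_pow _ _ _
    _ ≤ 1 / 2 * A ^ d := by gcongr; exact pow_le_of_le_one (by norm_num) (by norm_num) hd.ne'
    _ = A ^ Fintype.card (Fin d) / 2 := by rw [Fintype.card_fin]; ring
    _ < (u s).det := hdet
end

section
/- Let N be a totally geodesic submanifold of a Riemannian manifold (M, g), and choose local coordinates (x₁,…,x_d) near a point of N such that N = {x_{n+1} = ⋯ = x_d = 0} and the vector fields ∂/∂x_{n+1}, …, ∂/∂x_d restrict to an orthonormal frame of the normal bundle of N along N. Then the components of the cometric satisfy ∂g^{ij}/∂x_k = 0 on {x' = 0} for all 1 ≤ i, j ≤ n and n+1 ≤ k ≤ d. -/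
theorem stmt_18 (dd n : ℕ) (hn : 0 < n) (hnd : n < dd)
    (U : Set (Fin dd → ℝ)) (hU : IsOpen U)
    (ginv : (Fin dd → ℝ) → Matrix (Fin dd) (Fin dd) ℝ)
    (hsmooth : ∀ i j, ContDiffOn ℝ (⊤ : ℕ∞) (fun x => ginv x i j) U)
    (hsymm : ∀ x ∈ U, (ginv x).IsSymm)
    (hpos : ∀ x ∈ U, (ginv x).PosDef)
    -- adapted coordinates: along N = {x : xₖ = 0 for k ≥ n} the coordinate
    -- vector fields ∂/∂xₖ, k ≥ n, form an orthonormal frame of the normal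
    -- bundle of N, expressed on the cometric:
    (hframe : ∀ x ∈ U, (∀ k : Fin dd, n ≤ (k : ℕ) → x k = 0) →
      ∀ k l : Fin dd, n ≤ (k : ℕ) →
        ((l : ℕ) < n → ginv x k l = 0) ∧
        (n ≤ (l : ℕ) → ginv x k l = if k = l then 1 else 0))
    -- N is totally geodesic: every geodesic starting on N tangentially to N
    -- stays in N
    (htg : ∀ (x p : ℝ → Fin dd → ℝ) (T : ℝ), 0 < T →
      (∀ t ∈ Set.Ioo (-T) T, x t ∈ U) →
      (∀ t ∈ Set.Ioo (-T) T, ∀ i : Fin dd,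
        HasDerivAt (fun τ => x τ i) (∑ j, ginv (x t) i j * p t j) t ∧
        HasDerivAt (fun τ => p τ i)
          (-(fderiv ℝ
              (fun y => (1/2) * ∑ a, ∑ b, ginv y a b * p t a * p t b) (x t)
              (Pi.single i 1))) t) →
      (∀ k : Fin dd, n ≤ (k : ℕ) → x 0 k = 0 ∧ p 0 k = 0) →
      ∀ t ∈ Set.Ioo (-T) T, ∀ k : Fin dd, n ≤ (k : ℕ) → x t k = 0) :
    ∀ x ∈ U, (∀ k : Fin dd, n ≤ (k : ℕ) → x k = 0) →
      ∀ i j k : Fin dd, (i : ℕ) < n → (j : ℕ) < n → n ≤ (k : ℕ) →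
        fderiv ℝ (fun y => ginv y i j) x (Pi.single k 1) = 0 := by
  intro x₀ hx₀U hx₀N i j k hi hj hk
  classical
  have hdiff : ∀ (a b : Fin dd) (y : Fin dd → ℝ), y ∈ U →
      DifferentiableAt ℝ (fun x => ginv x a b) y := fun a b y hy =>
    ((hsmooth a b).contDiffAt (hU.mem_nhds hy)).differentiableAt (by simp)
  -- expansion of the derivative of the Hamiltonian in x
  have hDexp : ∀ (w : Fin dd → ℝ) (y : Fin dd → ℝ), y ∈ U →
      fderiv ℝ (fun x => (1/2) * ∑ a, ∑ b, ginv x a b * w a * w b) y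
        = (1/2 : ℝ) • ∑ a, ∑ b, (w a * w b) • fderiv ℝ (fun x => ginv x a b) y := by
    intro w y hy
    have hin : ∀ a b : Fin dd, DifferentiableAt ℝ (fun x => ginv x a b * w a * w b) y :=
      fun a b => ((hdiff a b y hy).mul_const (w a)).mul_const (w b)
    have hsumin : ∀ a : Fin dd, DifferentiableAt ℝ (fun x => ∑ b, ginv x a b * w a * w b) y :=
      fun a => DifferentiableAt.fun_sum (fun b _ => hin a b)
    rw [fderiv_const_mul (DifferentiableAt.fun_sum (fun a _ => hsumin a))]
    congr 1
    rw [fderiv_fun_sum (fun a _ => hsumin a)]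
    refine Finset.sum_congr rfl (fun a _ => ?_)
    rw [fderiv_fun_sum (fun b _ => hin a b)]
    refine Finset.sum_congr rfl (fun b _ => ?_)
    have : (fun x => ginv x a b * w a * w b) = (fun x => ginv x a b * (w a * w b)) := by
      funext x; ring
    rw [this, fderiv_mul_const (hdiff a b y hy)]
  have hDapply : ∀ (w : Fin dd → ℝ) (y : Fin dd → ℝ), y ∈ U → ∀ m : Fin dd,
      (fderiv ℝ (fun x => (1/2) * ∑ a, ∑ b, ginv x a b * w a * w b) y) (Pi.single m 1)
        = (1/2 : ℝ) * ∑ a, ∑ b, (w a * w b) *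
            (fderiv ℝ (fun x => ginv x a b) y (Pi.single m 1)) := by
    intro w y hy m
    rw [hDexp w y hy]
    simp [ContinuousLinearMap.sum_apply, ContinuousLinearMap.smul_apply, smul_eq_mul,
      Finset.mul_sum]
  -- tangential derivatives of the mixed components vanish
  have htang : ∀ (a b : Fin dd), n ≤ (a : ℕ) → (b : ℕ) < n →
      ∀ w : Fin dd → ℝ, (∀ c : Fin dd, n ≤ (c : ℕ) → w c = 0) →
      fderiv ℝ (fun x => ginv x a b) x₀ w = 0 := by
    intro a b ha hb w hw
    have hline : HasDerivAt (fun s : ℝ => x₀ + s • w) w 0 := by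
      simpa using ((hasDerivAt_id (0:ℝ)).smul_const w).const_add x₀
    have hcomp : HasDerivAt (fun s : ℝ => ginv (x₀ + s • w) a b)
        (fderiv ℝ (fun x => ginv x a b) x₀ w) 0 := by
      have hf : HasFDerivAt (fun x => ginv x a b) (fderiv ℝ (fun x => ginv x a b) x₀)
          ((fun s : ℝ => x₀ + s • w) 0) := by
        simpa using (hdiff a b x₀ hx₀U).hasFDerivAt
      exact hf.comp_hasDerivAt 0 hline
    have hzero : HasDerivAt (fun s : ℝ => ginv (x₀ + s • w) a b) 0 0 := by
      have hcont : ContinuousAt (fun s : ℝ => x₀ + s • w) 0 :=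
        hline.continuousAt
      have hmem : (fun s : ℝ => x₀ + s • w) ⁻¹' U ∈ nhds (0 : ℝ) := by
        apply hcont.preimage_mem_nhds
        simpa using hU.mem_nhds hx₀U
      refine (hasDerivAt_const (0:ℝ) (0:ℝ)).congr_of_eventuallyEq ?_
      filter_upwards [hmem] with s hs
      have hN : ∀ c : Fin dd, n ≤ (c : ℕ) → (x₀ + s • w) c = 0 := by
        intro c hc
        simp [hx₀N c hc, hw c hc]
      exact (hframe _ hs hN a b ha).1 hb
    have := hzero.unique hcomp
    exact this.symm
  -- the key quadratic identity
  have key : ∀ q : Fin dd → ℝ, (∀ c : Fin dd, n ≤ (c : ℕ) → q c = 0) →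
      ∑ a, ∑ b, (q a * q b) *
        (fderiv ℝ (fun x => ginv x a b) x₀ (Pi.single k 1)) = 0 := by
    intro q hq
    -- the Hamiltonian vector field
    set v : ((Fin dd → ℝ) × (Fin dd → ℝ)) → ((Fin dd → ℝ) × (Fin dd → ℝ)) :=
      fun z => (fun a => ∑ b, ginv z.1 a b * z.2 b,
        fun a => -(fderiv ℝ
          (fun y => (1/2) * ∑ c, ∑ d, ginv y c d * z.2 c * z.2 d) z.1
          (Pi.single a 1))) with hv
    -- smoothness of the vector field at (x₀, q)
    have hfst : ContDiffAt ℝ 1 (fun z : (Fin dd → ℝ) × (Fin dd → ℝ) =>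
        fun a : Fin dd => ∑ b, ginv z.1 a b * z.2 b) (x₀, q) := by
      refine contDiffAt_pi.mpr fun a => ?_
      refine ContDiffAt.sum fun b _ => ContDiffAt.mul ?_ ?_
      · have h1 : ContDiffAt ℝ 1 (fun x => ginv x a b) x₀ :=
          ((hsmooth a b).contDiffAt (hU.mem_nhds hx₀U)).of_le (by simp)
        exact h1.comp (x₀, q) contDiffAt_fst
      · fun_prop
    have hGsm : ContDiffAt ℝ 1 (fun z : (Fin dd → ℝ) × (Fin dd → ℝ) =>
        fun a : Fin dd => -((1/2 : ℝ) * ∑ c, ∑ d, (z.2 c * z.2 d) *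
          (fderiv ℝ (fun x => ginv x c d) z.1 (Pi.single a 1)))) (x₀, q) := by
      refine contDiffAt_pi.mpr fun a => ContDiffAt.neg ?_
      refine ContDiffAt.mul contDiffAt_const ?_
      refine ContDiffAt.sum fun cc _ => ContDiffAt.sum fun d _ => ?_
      refine ContDiffAt.mul (ContDiffAt.mul ?_ ?_) ?_
      · fun_prop
      · fun_prop
      · have h1 : ContDiffOn ℝ 1 (fderiv ℝ (fun x => ginv x cc d)) U :=
          (hsmooth cc d).fderiv_of_isOpen hU (by exact WithTop.coe_le_coe.mpr le_top)
        have h2 : ContDiffAt ℝ 1 (fderiv ℝ (fun x => ginv x cc d)) x₀ :=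
          h1.contDiffAt (hU.mem_nhds hx₀U)
        have h3 : ContDiffAt ℝ 1
            (fun z : (Fin dd → ℝ) × (Fin dd → ℝ) =>
              fderiv ℝ (fun x => ginv x cc d) z.1) (x₀, q) :=
          h2.comp (x₀, q) contDiffAt_fst
        exact h3.clm_apply contDiffAt_const
    have hsnd : ContDiffAt ℝ 1 (fun z : (Fin dd → ℝ) × (Fin dd → ℝ) =>
        fun a : Fin dd => -(fderiv ℝ
          (fun y => (1/2) * ∑ c, ∑ d, ginv y c d * z.2 c * z.2 d) z.1
          (Pi.single a 1))) (x₀, q) := by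
      refine hGsm.congr_of_eventuallyEq ?_
      have hUnhds : {z : (Fin dd → ℝ) × (Fin dd → ℝ) | z.1 ∈ U} ∈ nhds ((x₀ : Fin dd → ℝ), q) :=
        (hU.preimage continuous_fst).mem_nhds hx₀U
      filter_upwards [hUnhds] with z hz
      funext a
      rw [hDapply z.2 z.1 hz a]
    have hvsmooth : ContDiffAt ℝ 1 v ((x₀ : Fin dd → ℝ), q) := hfst.prodMk hsnd
    -- local solution of the ODE
    obtain ⟨α, hα0, ε, hε, hαde⟩ := hvsmooth.exists_forall_mem_closedBall_exists_eq_forall_mem_Ioo_hasDerivAt₀ (0 : ℝ)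
    simp only [zero_sub, zero_add] at hαde
    have h0ε : (0 : ℝ) ∈ Set.Ioo (-ε) ε := ⟨neg_lt_zero.mpr hε, hε⟩
    -- shrink the interval so that the solution stays in U
    have hcontX : ContinuousAt (fun t => (α t).1) 0 :=
      (continuous_fst.continuousAt).comp (hαde 0 h0ε).continuousAt
    have hmemU : (fun t => (α t).1) ⁻¹' U ∈ nhds (0 : ℝ) := by
      apply hcontX.preimage_mem_nhds
      rw [hα0]
      exact hU.mem_nhds hx₀U
    obtain ⟨r, hr0, hrsub⟩ := Metric.mem_nhds_iff.mp hmemU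
    rw [Real.ball_eq_Ioo, zero_sub, zero_add] at hrsub
    set T : ℝ := min ε r with hTdef
    have hT : 0 < T := lt_min hε hr0
    have hTε : T ≤ ε := min_le_left _ _
    have hTr : T ≤ r := min_le_right _ _
    have h0mem : (0 : ℝ) ∈ Set.Ioo (-T) T := ⟨neg_lt_zero.mpr hT, hT⟩
    have hIooε : Set.Ioo (-T) T ⊆ Set.Ioo (-ε) ε := by
      intro t ht
      exact ⟨by linarith [ht.1], by linarith [ht.2]⟩
    have hXU : ∀ t ∈ Set.Ioo (-T) T, (α t).1 ∈ U := by
      intro t ht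
      exact hrsub ⟨by linarith [ht.1], by linarith [ht.2]⟩
    -- the solution satisfies the Hamiltonian system componentwise
    have hXP : ∀ t ∈ Set.Ioo (-T) T, ∀ m : Fin dd,
        HasDerivAt (fun τ => (α τ).1 m) (∑ b, ginv ((α t).1) m b * (α t).2 b) t ∧
        HasDerivAt (fun τ => (α τ).2 m)
          (-(fderiv ℝ
            (fun y => (1/2) * ∑ a, ∑ b, ginv y a b * (α t).2 a * (α t).2 b)
            ((α t).1) (Pi.single m 1))) t := by
      intro t ht m
      have hα := hαde t (hIooε ht)
      constructor
      · have := (((ContinuousLinearMap.proj m).comp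
          (ContinuousLinearMap.fst ℝ (Fin dd → ℝ) (Fin dd → ℝ)))).hasFDerivAt.comp_hasDerivAt t hα
        simpa [hv, Function.comp_def] using this
      · have := (((ContinuousLinearMap.proj m).comp
          (ContinuousLinearMap.snd ℝ (Fin dd → ℝ) (Fin dd → ℝ)))).hasFDerivAt.comp_hasDerivAt t hα
        simpa [hv, Function.comp_def] using this
    -- initial conditions
    have hinit : ∀ m : Fin dd, n ≤ (m : ℕ) → (α 0).1 m = 0 ∧ (α 0).2 m = 0 := by
      intro m hm
      rw [hα0]
      exact ⟨hx₀N m hm, hq m hm⟩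
    -- total geodesy: the normal coordinates vanish along the solution
    have hXzero := htg (fun t => (α t).1) (fun t => (α t).2) T hT hXU hXP hinit
    -- hence the k-th velocity component vanishes identically
    have hφ0 : ∀ t ∈ Set.Ioo (-T) T, (∑ b, ginv ((α t).1) k b * (α t).2 b) = 0 := by
      intro t ht
      have h1 := (hXP t ht k).1
      have h2 : HasDerivAt (fun τ => (α τ).1 k) 0 t := by
        refine (hasDerivAt_const t (0 : ℝ)).congr_of_eventuallyEq ?_
        filter_upwards [Ioo_mem_nhds ht.1 ht.2] with s hs
        exact hXzero s hs k hk
      exact h1.unique h2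
    -- differentiate this identity at t = 0
    have hXd : HasDerivAt (fun τ => (α τ).1) ((v (α 0)).1) 0 := by
      have := (ContinuousLinearMap.fst ℝ (Fin dd → ℝ) (Fin dd → ℝ)).hasFDerivAt.comp_hasDerivAt
        0 (hαde 0 h0ε)
      simpa [Function.comp_def] using this
    have hterm : ∀ b : Fin dd, HasDerivAt (fun t => ginv ((α t).1) k b * (α t).2 b)
        ((fderiv ℝ (fun x => ginv x k b) x₀ ((v (α 0)).1)) * ((α 0).2 b)
          + ginv ((α 0).1) k b *
            (-(fderiv ℝ
              (fun y => (1/2) * ∑ a, ∑ b', ginv y a b' * (α 0).2 a * (α 0).2 b')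
              ((α 0).1) (Pi.single b 1)))) 0 := by
      intro b
      have hf : HasFDerivAt (fun x => ginv x k b) (fderiv ℝ (fun x => ginv x k b) x₀)
          ((fun τ => (α τ).1) 0) := by
        simpa [hα0] using (hdiff k b x₀ hx₀U).hasFDerivAt
      have hg : HasDerivAt (fun t => ginv ((α t).1) k b)
          (fderiv ℝ (fun x => ginv x k b) x₀ ((v (α 0)).1)) 0 :=
        by have := hf.comp_hasDerivAt 0 hXd; exact this
      exact hg.mul ((hXP 0 h0mem b).2)
    have hφd : HasDerivAt (fun t => ∑ b, ginv ((α t).1) k b * (α t).2 b)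
        (∑ b, ((fderiv ℝ (fun x => ginv x k b) x₀ ((v (α 0)).1)) * ((α 0).2 b)
          + ginv ((α 0).1) k b *
            (-(fderiv ℝ
              (fun y => (1/2) * ∑ a, ∑ b', ginv y a b' * (α 0).2 a * (α 0).2 b')
              ((α 0).1) (Pi.single b 1))))) 0 :=
      HasDerivAt.fun_sum (fun b _ => hterm b)
    have hφd0 : HasDerivAt (fun t => ∑ b, ginv ((α t).1) k b * (α t).2 b) 0 0 := by
      refine (hasDerivAt_const (0 : ℝ) (0 : ℝ)).congr_of_eventuallyEq ?_
      filter_upwards [Ioo_mem_nhds h0mem.1 h0mem.2] with s hs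
      exact hφ0 s hs
    have hsum0 := hφd0.unique hφd
    -- clean up the initial values
    have hX0 : (α 0).1 = x₀ := by rw [hα0]
    have hP0 : (α 0).2 = q := by rw [hα0]
    rw [hX0, hP0] at hsum0
    have hwdef : (v ((x₀ : Fin dd → ℝ), q)).1 = fun a => ∑ b, ginv x₀ a b * q b := by
      rw [hv]
    have hw : ∀ a : Fin dd, n ≤ (a : ℕ) → (fun a => ∑ b, ginv x₀ a b * q b) a = 0 := by
      intro a ha
      refine Finset.sum_eq_zero fun b _ => ?_
      by_cases hbn : (b : ℕ) < n
      · rw [(hframe x₀ hx₀U hx₀N a b ha).1 hbn, zero_mul]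
      · rw [hq b (le_of_not_gt hbn), mul_zero]
    rw [hα0, hwdef] at hsum0
    rw [Finset.sum_eq_single k] at hsum0
    · have hqk : q k = 0 := hq k hk
      have hgkk : ginv x₀ k k = 1 := by
        simpa using (hframe x₀ hx₀U hx₀N k k hk).2 hk
      rw [hqk, hgkk, mul_zero, zero_add, one_mul] at hsum0
      have hD := hDapply q x₀ hx₀U k
      rw [hD] at hsum0
      have : (1/2 : ℝ) * ∑ a, ∑ b, q a * q b *
          (fderiv ℝ (fun x => ginv x a b) x₀ (Pi.single k 1)) = 0 := by linarith [neg_eq_zero.mp hsum0.symm]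
      linarith [this]
    · intro b _ hbk
      by_cases hbn : (b : ℕ) < n
      · rw [(hframe x₀ hx₀U hx₀N k b hk).1 hbn, htang k b hk hbn _ hw, zero_mul, zero_mul,
          add_zero]
      · push_neg at hbn
        have hgkb : ginv x₀ k b = 0 := by
          have := (hframe x₀ hx₀U hx₀N k b hk).2 hbn
          rwa [if_neg (Ne.symm hbk)] at this
        rw [hq b hbn, mul_zero, hgkb, zero_mul, add_zero]
    · intro hku
      exact absurd (Finset.mem_univ k) hku
  -- polarization
  set c : Fin dd → Fin dd → ℝ :=
    fun a b => fderiv ℝ (fun x => ginv x a b) x₀ (Pi.single k 1) with hc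
  have hcsymm : c i j = c j i := by
    have heq : (fun x => ginv x i j) =ᶠ[nhds x₀] (fun x => ginv x j i) := by
      filter_upwards [hU.mem_nhds hx₀U] with y hy
      exact (hsymm y hy).apply j i
    rw [hc]
    simp only []
    rw [heq.fderiv_eq]
  have hsingle : ∀ m : Fin dd, (m : ℕ) < n → c m m = 0 := by
    intro m hm
    have := key (Pi.single m 1) (by
      intro cc hcc
      apply Pi.single_eq_of_ne
      intro h; subst h; omega)
    rw [Finset.sum_eq_single m] at this
    · rw [Finset.sum_eq_single m] at this
      · simpa using this
      · intro b _ hb; simp [Pi.single_eq_of_ne hb]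
      · simp
    · intro a _ ha
      rw [Finset.sum_eq_single m]
      · simp [Pi.single_eq_of_ne ha]
      · intro b _ hb; simp [Pi.single_eq_of_ne hb]
      · simp
    · simp
  by_cases hij : i = j
  · subst hij; exact hsingle i hi
  · -- q = indicator of {i, j}
    set q : Fin dd → ℝ := fun m => if m = i then 1 else if m = j then 1 else 0 with hqdef
    have hq : ∀ cc : Fin dd, n ≤ (cc : ℕ) → q cc = 0 := by
      intro cc hcc
      have h1 : cc ≠ i := by intro h; rw [h] at hcc; omega
      have h2 : cc ≠ j := by intro h; rw [h] at hcc; omega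
      simp [hqdef, h1, h2]
    have hkey := key q hq
    have hsum : ∑ a, ∑ b, (q a * q b) *
        (fderiv ℝ (fun x => ginv x a b) x₀ (Pi.single k 1))
        = c i i + c i j + c j i + c j j := by
      have hqi : q i = 1 := by simp [hqdef]
      have hqj : q j = 1 := by simp [hqdef, Ne.symm hij]
      have houter : ∀ h : Fin dd → ℝ, ∑ a, q a * h a = h i + h j := by
        intro h
        rw [← Finset.sum_subset (Finset.subset_univ ({i, j} : Finset (Fin dd)))]
        · rw [Finset.sum_pair hij, hqi, hqj, one_mul, one_mul]
        · intro a _ ha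
          simp only [Finset.mem_insert, Finset.mem_singleton, not_or] at ha
          simp [hqdef, ha.1, ha.2]
      have hinner : ∀ a : Fin dd, ∑ b, q a * q b * c a b = q a * ∑ b, q b * c a b := by
        intro a
        rw [Finset.mul_sum]
        exact Finset.sum_congr rfl (fun b _ => by ring)
      calc ∑ a, ∑ b, (q a * q b) * (fderiv ℝ (fun x => ginv x a b) x₀ (Pi.single k 1))
          = ∑ a, q a * ∑ b, q b * c a b := Finset.sum_congr rfl (fun a _ => hinner a)
        _ = (∑ b, q b * c i b) + (∑ b, q b * c j b) := houter _
        _ = (c i i + c i j) + (c j i + c j j) := by rw [houter (c i), houter (c j)]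
        _ = c i i + c i j + c j i + c j j := by ring
    rw [hsum, hsingle i hi, hsingle j hj, hcsymm] at hkey
    have hji : c j i = 0 := by linarith
    show c i j = 0
    rw [hcsymm, hji]
end
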